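/- arXiv:0901.0054 — 7 statements merged into one kernel-verified Lean document; each statement's English description precedes it below -/
import Mathlib

section
/- Let F be a field with char F ≠ 2. A monic original quartic polynomial f = x^4 + u·x^3 + v·x^2 + w·x ∈ F[x] is decomposable (i.e., f = g ∘ h with deg g = deg h = 2) if and only if u^3 - 4·u·v + 8·w = 0. -/
/-!
The invariant `c₃³ - 4c₄c₃c₂ + 8c₄²c₁` of a quartic vanishes identically on compositions of two
quadratics, which gives one direction. Conversely, `(X² + aX) ∘ (X² + bX)` has coefficients
`2b, b² + a, ab`; when `2` is invertible, `b = u/2` and `a = v - b²` match the first two, and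
`w = ab` is then exactly the vanishing of the invariant.
-/

open Polynomial

namespace Polynomial

variable {R : Type*} [CommRing R]

def quarticInvariant (f : R[X]) : R :=
  f.coeff 3 ^ 3 - 4 * f.coeff 4 * f.coeff 3 * f.coeff 2 + 8 * f.coeff 4 ^ 2 * f.coeff 1

lemma eq_quadratic_of_natDegree_le_two {p : R[X]} (hp : p.natDegree ≤ 2) :
    p = C (p.coeff 2) * X ^ 2 + C (p.coeff 1) * X + C (p.coeff 0) := by
  conv_lhs => rw [p.as_sum_range' 3 (by omega)]
  simp only [Finset.sum_range_succ, Finset.sum_range_zero, ← C_mul_X_pow_eq_monomial]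
  ring

lemma quadratic_comp_quadratic (a₂ a₁ a₀ b₂ b₁ b₀ : R) :
    (C a₂ * X ^ 2 + C a₁ * X + C a₀).comp (C b₂ * X ^ 2 + C b₁ * X + C b₀) =
      C (a₂ * b₂ ^ 2) * X ^ 4 + C (2 * a₂ * b₂ * b₁) * X ^ 3
        + C (a₂ * b₁ ^ 2 + 2 * a₂ * b₂ * b₀ + a₁ * b₂) * X ^ 2
        + C (2 * a₂ * b₁ * b₀ + a₁ * b₁) * X + C (a₂ * b₀ ^ 2 + a₁ * b₀ + a₀) := by
  simp only [add_comp, mul_comp, C_comp, X_comp, pow_comp, C_mul, C_add, C_pow, map_ofNat]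
  ring

lemma quarticInvariant_quartic (c₄ c₃ c₂ c₁ c₀ : R) :
    quarticInvariant (C c₄ * X ^ 4 + C c₃ * X ^ 3 + C c₂ * X ^ 2 + C c₁ * X + C c₀) =
      c₃ ^ 3 - 4 * c₄ * c₃ * c₂ + 8 * c₄ ^ 2 * c₁ := by
  simp [quarticInvariant, coeff_X_pow]

lemma quarticInvariant_comp_eq_zero {g h : R[X]} (hg : g.natDegree ≤ 2) (hh : h.natDegree ≤ 2) :
    quarticInvariant (g.comp h) = 0 := by
  rw [eq_quadratic_of_natDegree_le_two hg, eq_quadratic_of_natDegree_le_two hh,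
    quadratic_comp_quadratic, quarticInvariant_quartic]
  ring

lemma X_sq_add_C_mul_X_comp (a b : R) :
    (X ^ 2 + C a * X).comp (X ^ 2 + C b * X) =
      X ^ 4 + C (2 * b) * X ^ 3 + C (b ^ 2 + a) * X ^ 2 + C (a * b) * X := by
  simp only [add_comp, mul_comp, C_comp, X_comp, pow_comp, C_mul, C_add, C_pow, map_ofNat]
  ring

end Polynomial

theorem quartic_decomposable_iff
    {F : Type*} [Field F] (hchar : ringChar F ≠ 2) (u v w : F) :
    (∃ g h : F[X], g.natDegree = 2 ∧ h.natDegree = 2 ∧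
      (X ^ 4 + C u * X ^ 3 + C v * X ^ 2 + C w * X : F[X]) = g.comp h) ↔
    u ^ 3 - 4 * u * v + 8 * w = 0 := by
  have hf : quarticInvariant (X ^ 4 + C u * X ^ 3 + C v * X ^ 2 + C w * X : F[X]) =
      u ^ 3 - 4 * u * v + 8 * w := by
    simpa using quarticInvariant_quartic (1 : F) u v w 0
  constructor
  · rintro ⟨g, h, hg, hh, hfgh⟩
    rw [← hf, hfgh]
    exact quarticInvariant_comp_eq_zero hg.le hh.le
  · intro hinv
    have h2 : (2 : F) ≠ 0 := Ring.two_ne_zero hchar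
    refine ⟨X ^ 2 + C (v - (u / 2) ^ 2) * X, X ^ 2 + C (u / 2) * X, by compute_degree!,
      by compute_degree!, ?_⟩
    rw [X_sq_add_C_mul_X_comp]
    congr 4
    · field_simp
    · ring
    · field_simp
      linear_combination hinv
end

section
/- Let F_q be a finite field of characteristic p, let e be a divisor of d ≥ 2 with p not dividing e. Then the normal composition map γ_{d,e} : P_e^= × P_{d/e}^0 → P_d^=, (g,h) ↦ g ∘ h, is injective, and consequently the number of degree-d polynomials over F_q admitting a decomposition with left component of degree e and monic original right component of degree d/e equals q^{e + d/e}(1 - q^{-1}). -/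
open Polynomial

/-!
If `g₁ ∘ h₁ = g₂ ∘ h₂` with `h₁, h₂` monic of degree `m ≥ 1`, comparing leading coefficients
gives a common leading coefficient `c` of `g₁, g₂`, and `c (h₁ ^ e - h₂ ^ e)` is then a
difference of two polynomials of degree at most `(e - 1) m`. On the other hand
`h₁ ^ e - h₂ ^ e = (h₁ - h₂) ∑ h₁ ^ i h₂ ^ (e - 1 - i)`, where the sum has degree exactly
`(e - 1) m` because its top coefficient is `e`, nonzero as `p ∤ e`. Hence `h₁ - h₂` is a
constant, and it vanishes at `0`. Composition with a fixed nonconstant `h` is injective, so also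
`g₁ = g₂`.

For the count, the polynomials of degree exactly `e` are those of degree `< e + 1` but not `< e`,
and a monic `h` of degree `m` with `h 0 = 0` is `X` times a monic polynomial of degree `m - 1`.
-/

namespace Polynomial

section Composition

variable {R : Type*} [CommRing R]

theorem natDegree_comp_sub_C_leadingCoeff_mul_pow_le (g h : R[X]) :
    (g.comp h - C g.leadingCoeff * h ^ g.natDegree).natDegree ≤
      (g.natDegree - 1) * h.natDegree := by
  rw [← X_pow_comp (p := h), ← C_comp (a := g.leadingCoeff) (p := h), ← mul_comp, ← sub_comp,
    self_sub_C_mul_X_pow]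
  exact natDegree_comp_le.trans (Nat.mul_le_mul_right _ (eraseLead_natDegree_le g))

theorem natDegree_pow_sub_pow_of_monic [IsDomain R] {h₁ h₂ : R[X]} {e m : ℕ}
    (he : (e : R) ≠ 0) (hh₁ : h₁.Monic) (hh₂ : h₂.Monic) (hm₁ : h₁.natDegree = m)
    (hm₂ : h₂.natDegree = m) (hne : h₁ ≠ h₂) :
    (h₁ ^ e - h₂ ^ e).natDegree = (e - 1) * m + (h₁ - h₂).natDegree := by
  set S := ∑ i ∈ Finset.range e, h₁ ^ i * h₂ ^ (e - 1 - i)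
  have hterm : ∀ i ∈ Finset.range e, (h₁ ^ i * h₂ ^ (e - 1 - i)).Monic ∧
      (h₁ ^ i * h₂ ^ (e - 1 - i)).natDegree = (e - 1) * m := by
    intro i hi
    refine ⟨(hh₁.pow i).mul (hh₂.pow _), ?_⟩
    rw [(hh₁.pow i).natDegree_mul (hh₂.pow _), hh₁.natDegree_pow, hh₂.natDegree_pow, hm₁, hm₂,
      ← add_mul]
    have := Finset.mem_range.1 hi
    congr 1
    omega
  have hS : S.coeff ((e - 1) * m) = e := by
    rw [finsetSum_coeff,
      Finset.sum_congr rfl fun i hi => (hterm i hi).2 ▸ (hterm i hi).1.coeff_natDegree]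
    simp
  have hSdeg : S.natDegree = (e - 1) * m :=
    natDegree_eq_of_le_of_coeff_ne_zero
      (natDegree_sum_le_of_forall_le _ _ fun i hi => (hterm i hi).2.le) (hS ▸ he)
  have hS0 : S ≠ 0 := fun h => he (by rw [← hS, h, coeff_zero])
  rw [← geom_sum₂_mul, natDegree_mul hS0 (sub_ne_zero.2 hne), hSdeg]

theorem right_eq_of_comp_eq_comp [IsDomain R] {g₁ g₂ h₁ h₂ : R[X]} {e m : ℕ}
    (he : (e : R) ≠ 0) (hm : m ≠ 0) (hg₁ : g₁.natDegree = e) (hg₂ : g₂.natDegree = e)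
    (hh₁ : h₁.Monic) (hh₂ : h₂.Monic) (hm₁ : h₁.natDegree = m) (hm₂ : h₂.natDegree = m)
    (h0 : h₁.coeff 0 = h₂.coeff 0) (hcomp : g₁.comp h₁ = g₂.comp h₂) : h₁ = h₂ := by
  have hlc : g₁.leadingCoeff = g₂.leadingCoeff := by
    simpa [leadingCoeff_comp, hm₁, hm₂, hm, hh₁.leadingCoeff, hh₂.leadingCoeff] using
      congrArg leadingCoeff hcomp
  have hc : g₁.leadingCoeff ≠ 0 := by
    rintro hc
    rw [leadingCoeff_eq_zero.1 hc, natDegree_zero] at hg₁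
    exact he (by rw [← hg₁, Nat.cast_zero])
  by_contra hne
  have hle : (C g₁.leadingCoeff * (h₁ ^ e - h₂ ^ e)).natDegree ≤ (e - 1) * m := by
    have h₁le := natDegree_comp_sub_C_leadingCoeff_mul_pow_le g₁ h₁
    have h₂le := natDegree_comp_sub_C_leadingCoeff_mul_pow_le g₂ h₂
    rw [hg₁, hm₁] at h₁le
    rw [hg₂, hm₂, ← hlc] at h₂le
    have := natDegree_sub_le_of_le h₂le h₁le
    rwa [← hcomp, sub_sub_sub_cancel_left, ← mul_sub, max_self] at this
  rw [natDegree_C_mul hc, natDegree_pow_sub_pow_of_monic he hh₁ hh₂ hm₁ hm₂ hne] at hle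
  have hdeg : (h₁ - h₂).natDegree = 0 := by omega
  refine hne (sub_eq_zero.1 ?_)
  rw [eq_C_of_natDegree_eq_zero hdeg, coeff_sub, h0, sub_self, map_zero]

theorem left_eq_of_comp_eq_comp [NoZeroDivisors R] {g₁ g₂ h : R[X]} (hh : h.natDegree ≠ 0)
    (hcomp : g₁.comp h = g₂.comp h) : g₁ = g₂ := by
  have hzero : (g₁ - g₂).comp h = 0 := by rw [sub_comp, hcomp, sub_self]
  rcases comp_eq_zero_iff.1 hzero with hg | ⟨-, hC⟩
  · exact sub_eq_zero.1 hg
  · exact absurd (by rw [hC, natDegree_C]) hh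

end Composition

/-- The domain `P_e^= × P_m^0` of the normal composition map. -/
def normalDecompositions (R : Type*) [Semiring R] (e m : ℕ) : Set (R[X] × R[X]) :=
  {gh | gh.1.natDegree = e ∧ gh.1 ≠ 0 ∧ gh.2.Monic ∧ gh.2.natDegree = m ∧ gh.2.coeff 0 = 0}

theorem injOn_comp_normalDecompositions {R : Type*} [CommRing R] [IsDomain R] {e m : ℕ}
    (he : (e : R) ≠ 0) (hm : m ≠ 0) :
    Set.InjOn (fun gh : R[X] × R[X] => gh.1.comp gh.2) (normalDecompositions R e m) := by
  rintro ⟨g₁, h₁⟩ ⟨hg₁, -, hh₁, hm₁, h0₁⟩ ⟨g₂, h₂⟩ ⟨hg₂, -, hh₂, hm₂, h0₂⟩ hcomp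
  have hh : h₁ = h₂ := right_eq_of_comp_eq_comp he hm hg₁ hg₂ hh₁ hh₂ hm₁ hm₂
    (h0₁.trans h0₂.symm) hcomp
  subst hh
  exact Prod.ext (left_eq_of_comp_eq_comp (hm₁ ▸ hm) hcomp) rfl

section Counting

variable {R : Type*} [Semiring R] [Fintype R]

theorem card_degreeLT (n : ℕ) : Nat.card (degreeLT R n) = Fintype.card R ^ n := by
  rw [Nat.card_congr (degreeLTEquiv R n).toEquiv, Nat.card_fun, Nat.card_fin,
    Nat.card_eq_fintype_card]

theorem ncard_natDegree_eq_ne_zero (n : ℕ) :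
    {g : R[X] | g.natDegree = n ∧ g ≠ 0}.ncard = Fintype.card R ^ (n + 1) - Fintype.card R ^ n := by
  have hdiff : {g : R[X] | g.natDegree = n ∧ g ≠ 0} =
      (degreeLT R (n + 1) : Set R[X]) \ degreeLT R n := by
    ext g
    simp only [Set.mem_ofPred_eq, Set.mem_sdiff, SetLike.mem_coe, mem_degreeLT]
    rcases eq_or_ne g 0 with rfl | hg
    · simp
    · rw [degree_eq_natDegree hg, Nat.cast_lt, Nat.cast_lt]
      simp only [hg, ne_eq, not_false_eq_true, and_true]
      omega
  have : Finite (degreeLT R n) := .of_equiv _ (degreeLTEquiv R n).toEquiv.symm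
  rw [hdiff, Set.ncard_sdiff (degreeLT_mono n.le_succ), ← Nat.card_coe_set_eq,
    ← Nat.card_coe_set_eq, SetLike.coe_sort_coe, SetLike.coe_sort_coe, card_degreeLT, card_degreeLT]

theorem ncard_monic_natDegree_eq [Nontrivial R] (n : ℕ) :
    {h : R[X] | h.Monic ∧ h.natDegree = n}.ncard = Fintype.card R ^ n := by
  rw [← Nat.card_coe_set_eq, Set.coe_ofPred, Nat.card_congr (monicEquivDegreeLT n), card_degreeLT]

theorem ncard_monic_natDegree_eq_coeff_zero [Nontrivial R] {n : ℕ} (hn : n ≠ 0) :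
    {h : R[X] | h.Monic ∧ h.natDegree = n ∧ h.coeff 0 = 0}.ncard = Fintype.card R ^ (n - 1) := by
  have himage : {h : R[X] | h.Monic ∧ h.natDegree = n ∧ h.coeff 0 = 0} =
      (X * ·) '' {r : R[X] | r.Monic ∧ r.natDegree = n - 1} := by
    ext h
    constructor
    · rintro ⟨hmon, hdeg, h0⟩
      have hX : X * h.divX = h := by simpa [h0] using X_mul_divX_add h
      exact ⟨h.divX, ⟨monic_X.of_mul_monic_left (by rwa [hX]),
        by rw [natDegree_divX_eq_natDegree_tsub_one, hdeg]⟩, hX⟩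
    · rintro ⟨r, ⟨hr, hrdeg⟩, rfl⟩
      exact ⟨monic_X.mul hr, by rw [natDegree_X_mul hr.ne_zero]; omega, coeff_X_mul_zero r⟩
  rw [himage, Set.ncard_image_of_injective _ isRegular_X.left, ncard_monic_natDegree_eq]

theorem ncard_normalDecompositions [Nontrivial R] (e : ℕ) {m : ℕ} (hm : m ≠ 0) :
    (normalDecompositions R e m).ncard =
      Fintype.card R ^ (e + m) - Fintype.card R ^ (e + m - 1) := by
  have hprod : normalDecompositions R e m = {g : R[X] | g.natDegree = e ∧ g ≠ 0} ×ˢ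
      {h : R[X] | h.Monic ∧ h.natDegree = m ∧ h.coeff 0 = 0} := by
    ext ⟨g, h⟩
    simp only [normalDecompositions, Set.mem_prod, Set.mem_ofPred_eq, and_assoc]
  rw [hprod, Set.ncard_prod, ncard_natDegree_eq_ne_zero, ncard_monic_natDegree_eq_coeff_zero hm,
    Nat.sub_mul, ← pow_add, ← pow_add]
  congr 2 <;> omega

end Counting

end Polynomial

theorem tame_composition_injective_and_count
    {F : Type*} [Field F] [Fintype F] (p d e : ℕ) [CharP F p]
    (hd : 2 ≤ d) (he : e ∣ d) (hpe : ¬ p ∣ e) :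
    Set.InjOn (fun gh : F[X] × F[X] => gh.1.comp gh.2)
      {gh : F[X] × F[X] | gh.1.natDegree = e ∧ gh.1 ≠ 0 ∧
        gh.2.Monic ∧ gh.2.natDegree = d / e ∧ gh.2.coeff 0 = 0} ∧
    Set.ncard ((fun gh : F[X] × F[X] => gh.1.comp gh.2) ''
      {gh : F[X] × F[X] | gh.1.natDegree = e ∧ gh.1 ≠ 0 ∧
        gh.2.Monic ∧ gh.2.natDegree = d / e ∧ gh.2.coeff 0 = 0}) =
      Fintype.card F ^ (e + d / e) - Fintype.card F ^ (e + d / e - 1) := by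
  have heF : (e : F) ≠ 0 := fun h => hpe ((CharP.cast_eq_zero_iff F p e).1 h)
  have he0 : e ≠ 0 := by rintro rfl; exact heF Nat.cast_zero
  have hm : d / e ≠ 0 := (Nat.div_pos (Nat.le_of_dvd (by omega) he) (Nat.pos_of_ne_zero he0)).ne'
  have hinj := injOn_comp_normalDecompositions heF hm
  exact ⟨hinj, hinj.ncard_image.trans (ncard_normalDecompositions e hm)⟩
end

section
/- Let p be an odd prime, d, e ≥ 1 integers, c = gcd(d,e), r = p^d, q = p^e. Let ν denote the 2-adic valuation. Then ν(r^2 − 1) > ν(q − 1) if and only if e/c is odd. -/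
/-! By lifting the exponent at 2, for odd `x > 1` the valuation `ν(x ^ n - 1)` equals `ν(x - 1)`
when `n` is odd and `ν(x ^ 2 - 1) + ν(n) - 1 > ν(x - 1)` when `n` is even, so it is a strictly
increasing function of `ν(n)`. Hence `ν(p ^ (2d) - 1) > ν(p ^ e - 1)` iff `ν(e) < ν(2d) = ν(d) + 1`,
i.e. `ν(e) ≤ ν(d) = ν(gcd d e)`, which says exactly that `e / gcd d e` is odd. -/

open Finset

lemma padicValNat_two_eq_zero_iff_odd {n : ℕ} (hn : n ≠ 0) : padicValNat 2 n = 0 ↔ Odd n := by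
  rw [← Nat.not_even_iff_odd, even_iff_two_dvd, dvd_iff_padicValNat_ne_zero hn, not_not]

lemma padicValNat_gcd {p a b : ℕ} [hp : Fact p.Prime] (ha : a ≠ 0) (hb : b ≠ 0) :
    padicValNat p (Nat.gcd a b) = min (padicValNat p a) (padicValNat p b) := by
  simpa [Nat.factorization_def _ hp.out] using
    DFunLike.congr_fun (Nat.factorization_gcd ha hb) p

lemma odd_div_gcd_iff_padicValNat_two_le {d e : ℕ} (hd : d ≠ 0) (he : e ≠ 0) :
    Odd (e / Nat.gcd d e) ↔ padicValNat 2 e ≤ padicValNat 2 d := by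
  have hquot : e / Nat.gcd d e ≠ 0 :=
    (Nat.div_pos (Nat.gcd_le_right (m := d) he.bot_lt) (Nat.gcd_pos_of_pos_right d he.bot_lt)).ne'
  rw [← padicValNat_two_eq_zero_iff_odd hquot, padicValNat.div_of_dvd (Nat.gcd_dvd_right d e),
    padicValNat_gcd hd he]
  omega

lemma padicValNat_two_pow_sub_one_of_odd {x n : ℕ} (hx : Odd x) (hn : Odd n) :
    padicValNat 2 (x ^ n - 1) = padicValNat 2 (x - 1) := by
  obtain rfl | h1x : x = 1 ∨ 1 < x := by have := hx.pos; omega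
  · simp
  have hgeom : (∑ i ∈ range n, x ^ i) * (x - 1) = x ^ n - 1 := geom_sum_mul_of_one_le h1x.le n
  have hgeom_odd : Odd (∑ i ∈ range n, x ^ i) := by
    rw [odd_sum_iff_odd_card_odd, filter_true_of_mem fun i _ ↦ hx.pow, card_range]
    exact hn
  rw [← hgeom, padicValNat.mul hgeom_odd.pos.ne' (by omega),
    (padicValNat_two_eq_zero_iff_odd hgeom_odd.pos.ne').mpr hgeom_odd, zero_add]

lemma padicValNat_two_pow_sub_one_add_one {x n : ℕ} (h1x : 1 < x) (hx : Odd x) (hn : n ≠ 0) :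
    padicValNat 2 (x ^ n - 1) + 1 =
      padicValNat 2 (x - 1) +
        if padicValNat 2 n = 0 then 1 else padicValNat 2 (x + 1) + padicValNat 2 n := by
  split_ifs with hn_odd
  · rw [padicValNat_two_pow_sub_one_of_odd hx ((padicValNat_two_eq_zero_iff_odd hn).mp hn_odd)]
  · have hn_even : Even n := by
      rwa [padicValNat_two_eq_zero_iff_odd hn, Nat.not_odd_iff_even] at hn_odd
    rw [padicValNat.pow_two_sub_one h1x (Nat.not_even_iff_odd.mpr hx ∘ even_iff_two_dvd.mpr) hn
      hn_even]
    ring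

lemma padicValNat_two_pow_sub_one_lt_iff {x m n : ℕ} (h1x : 1 < x) (hx : Odd x) (hm : m ≠ 0)
    (hn : n ≠ 0) :
    padicValNat 2 (x ^ m - 1) < padicValNat 2 (x ^ n - 1) ↔
      padicValNat 2 m < padicValNat 2 n := by
  have hx_succ : padicValNat 2 (x + 1) ≠ 0 :=
    (dvd_iff_padicValNat_ne_zero (by omega)).mp (even_iff_two_dvd.mp hx.add_one)
  rw [← add_lt_add_iff_right 1, padicValNat_two_pow_sub_one_add_one h1x hx hm,
    padicValNat_two_pow_sub_one_add_one h1x hx hn]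
  split_ifs <;> omega

theorem two_adic_valuation_comparison
    (p d e : ℕ) (hp : p.Prime) (hodd : Odd p) (hd : 1 ≤ d) (he : 1 ≤ e) :
    padicValNat 2 (p ^ (2 * d) - 1) > padicValNat 2 (p ^ e - 1) ↔
      Odd (e / Nat.gcd d e) := by
  have hval_two_mul : padicValNat 2 (2 * d) = padicValNat 2 d + 1 := by
    rw [padicValNat.mul two_ne_zero (by omega), padicValNat.self one_lt_two, add_comm]
  rw [gt_iff_lt, padicValNat_two_pow_sub_one_lt_iff hp.one_lt hodd (by omega) (by omega),
    hval_two_mul, odd_div_gcd_iff_padicValNat_two_le (by omega) (by omega)]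
  omega
end

section
/- Let p be a prime, e, d ≥ 1 integers, c = gcd(d,e), z = p^c, q = p^e, r = p^d, and b = gcd(q−1, r+1). Let δ = ν(d), ε = ν(e) (2-adic valuations), α = ν(r^2−1), β = ν(q−1). Define λ = 2 if δ < ε and λ = 1 otherwise, and μ = 1 if α > β and μ = 0 otherwise. Then b = (z^λ − 1)·2^μ/(z − 1); explicitly b = 2(z+1) if δ<ε and α>β; b = z+1 if δ<ε and α≤β; b = 2 if δ≥ε and α>β; b = 1 if δ≥ε and α≤β. -/
/-!
Write `d = d' c`, `e = e' c` with `c = gcd d e` and `d'`, `e'` coprime, and put `z = p ^ c`.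
Since `z ^ d' + 1` divides `z ^ (2 d') - 1`, the gcd of `z ^ e' - 1` and `z ^ d' + 1` divides
`z ^ gcd(e', 2) - 1`; from there it is `z + 1` when `e'` is even and `gcd (z - 1) 2` when `e'` is
odd. The exponent `e'` is even exactly when `ν d < ν e`. For odd `p`, lifting the exponent shows
that `ν (p ^ n - 1)` is a strictly increasing function of `ν n`, so `α > β` holds exactly when `p`
is odd and `ν e ≤ ν d`.
-/

open Nat

theorem Nat.odd_geom_sum {a n : ℕ} (ha : Odd a) (hn : Odd n) :
    Odd (∑ i ∈ Finset.range n, a ^ i) := by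
  rw [Finset.odd_sum_iff_odd_card_odd, Finset.filter_true_of_mem fun i _ => ha.pow,
    Finset.card_range]
  exact hn

theorem padicValNat.pow_two_sub_one_of_odd {a n : ℕ} (ha : Odd a) (hn : Odd n) :
    padicValNat 2 (a ^ n - 1) = padicValNat 2 (a - 1) := by
  rcases eq_or_ne a 1 with rfl | ha1
  · simp
  have hsum := geom_sum_mul_of_one_le (Nat.one_le_iff_ne_zero.mpr ha.pos.ne') n
  rw [← hsum, padicValNat.mul (Nat.odd_geom_sum ha hn).pos.ne' (by have := ha.pos; omega),
    padicValNat.eq_zero_of_not_dvd (Nat.odd_geom_sum ha hn).not_two_dvd_nat, zero_add]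

theorem padicValNat.pow_two_sub_one_lt_iff {a m n : ℕ} (ha : Odd a) (ha1 : 1 < a)
    (hm : m ≠ 0) (hn : n ≠ 0) :
    padicValNat 2 (a ^ m - 1) < padicValNat 2 (a ^ n - 1) ↔
      padicValNat 2 m < padicValNat 2 n := by
  have hplus : 1 ≤ padicValNat 2 (a + 1) :=
    one_le_padicValNat_of_dvd (by omega) (even_iff_two_dvd.mp ha.add_one)
  have key : ∀ {k}, k ≠ 0 →
      (padicValNat 2 (a ^ k - 1) + 1 =
          padicValNat 2 (a + 1) + padicValNat 2 (a - 1) + padicValNat 2 k ∧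
        1 ≤ padicValNat 2 k) ∨
      (padicValNat 2 (a ^ k - 1) = padicValNat 2 (a - 1) ∧ padicValNat 2 k = 0) := by
    intro k hk
    rcases Nat.even_or_odd k with hk2 | hk2
    · exact .inl ⟨padicValNat.pow_two_sub_one ha1 ha.not_two_dvd_nat hk hk2,
        one_le_padicValNat_of_dvd hk (even_iff_two_dvd.mp hk2)⟩
    · exact .inr ⟨padicValNat.pow_two_sub_one_of_odd ha hk2,
        padicValNat.eq_zero_of_not_dvd hk2.not_two_dvd_nat⟩
  have := key hm
  have := key hn
  omega

theorem padicValNat.pow_two_sub_one_lt_sq_iff {a m n : ℕ} (ha : 2 ≤ a)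
    (hm : m ≠ 0) (hn : n ≠ 0) :
    padicValNat 2 (a ^ m - 1) < padicValNat 2 ((a ^ n) ^ 2 - 1) ↔
      Odd a ∧ padicValNat 2 m ≤ padicValNat 2 n := by
  rw [← pow_mul]
  rcases Nat.even_or_odd a with ha2 | ha2
  · have hzero : ∀ {k}, k ≠ 0 → padicValNat 2 (a ^ k - 1) = 0 := fun hk =>
      padicValNat.eq_zero_of_not_dvd (Nat.Even.sub_odd (Nat.one_le_pow _ _ (by omega))
        (ha2.pow_of_ne_zero hk) odd_one).not_two_dvd_nat
    rw [hzero hm, hzero (k := n * 2) (by omega)]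
    simp [Nat.not_odd_iff_even.mpr ha2]
  · rw [padicValNat.pow_two_sub_one_lt_iff ha2 (by omega) hm (by omega),
      padicValNat.mul hn two_ne_zero, padicValNat.self one_lt_two]
    simp only [ha2, true_and]
    omega

theorem padicValNat_mul_lt_mul_iff_dvd {p c m n : ℕ} [hp : Fact p.Prime] (hc : c ≠ 0)
    (hm : m ≠ 0) (hn : n ≠ 0) (h : Coprime m n) :
    padicValNat p (m * c) < padicValNat p (n * c) ↔ p ∣ n := by
  rw [padicValNat.mul hm hc, padicValNat.mul hn hc, add_lt_add_iff_right]
  refine ⟨fun hlt => dvd_of_one_le_padicValNat (by omega), fun hpn => ?_⟩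
  have hpm : ¬ p ∣ m := fun hpm =>
    hp.out.one_lt.ne' (Nat.eq_one_of_dvd_one (h.gcd_eq_one ▸ Nat.dvd_gcd hpm hpn))
  rw [padicValNat.eq_zero_of_not_dvd hpm]
  exact one_le_padicValNat_of_dvd hn hpn

theorem Nat.pow_add_one_dvd_pow_two_mul_sub_one (a m : ℕ) : a ^ m + 1 ∣ a ^ (2 * m) - 1 :=
  ⟨a ^ m - 1, by rw [pow_mul', ← Nat.sq_sub_sq, one_pow]⟩

theorem Nat.gcd_pow_sub_one_pow_add_one_of_coprime (a : ℕ) {m n : ℕ} (h : Coprime m n) :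
    gcd (a ^ n - 1) (a ^ m + 1) = gcd (a ^ gcd n 2 - 1) (a ^ m + 1) := by
  calc gcd (a ^ n - 1) (a ^ m + 1)
      = gcd (a ^ n - 1) (gcd (a ^ (2 * m) - 1) (a ^ m + 1)) := by
        rw [Nat.gcd_eq_right (Nat.pow_add_one_dvd_pow_two_mul_sub_one a m)]
    _ = gcd (a ^ gcd n (2 * m) - 1) (a ^ m + 1) := by
        rw [← Nat.gcd_assoc, Nat.pow_sub_one_gcd_pow_sub_one]
    _ = gcd (a ^ gcd n 2 - 1) (a ^ m + 1) := by rw [h.gcd_mul_right_cancel_right]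

theorem Nat.gcd_pow_sub_one_pow_add_one_of_odd {a m n : ℕ} (ha : a ≠ 0) (h : Coprime m n)
    (hn : Odd n) : gcd (a ^ n - 1) (a ^ m + 1) = gcd (a - 1) 2 := by
  rw [gcd_pow_sub_one_pow_add_one_of_coprime a h, hn.coprime_two_right.gcd_eq_one, pow_one]
  obtain ⟨k, hk⟩ := Nat.sub_one_dvd_pow_sub_one a m
  have hsplit : a ^ m + 1 = 2 + k * (a - 1) := by
    have := Nat.one_le_pow m a (Nat.pos_of_ne_zero ha)
    rw [mul_comm, ← hk]
    omega
  rw [hsplit, Nat.gcd_add_mul_right_right]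

theorem Nat.gcd_pow_sub_one_pow_add_one_of_even {a m n : ℕ} (ha : a ≠ 0) (h : Coprime m n)
    (hn : Even n) : gcd (a ^ n - 1) (a ^ m + 1) = a + 1 := by
  have hm : Odd m := (h.coprime_dvd_right (even_iff_two_dvd.mp hn)).odd_of_right
  rw [gcd_pow_sub_one_pow_add_one_of_coprime a h, Nat.gcd_eq_right (even_iff_two_dvd.mp hn)]
  obtain ⟨k, rfl⟩ := hm
  obtain ⟨q, hq⟩ := Nat.pow_sub_one_dvd_pow_sub_one a (dvd_mul_right 2 k)
  have hsplit : a ^ (2 * k + 1) + 1 = (a + 1) + a * q * (a ^ 2 - 1) := by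
    have h2k : a ^ (2 * k) = (a ^ 2 - 1) * q + 1 := by
      have := Nat.one_le_pow (2 * k) a (Nat.pos_of_ne_zero ha)
      omega
    rw [pow_succ, h2k]
    ring
  have hdvd : a + 1 ∣ a ^ 2 - 1 := ⟨a - 1, by rw [← Nat.sq_sub_sq, one_pow]⟩
  rw [hsplit, Nat.gcd_add_mul_right_right, Nat.gcd_eq_right hdvd]

theorem gcd_q_sub_one_r_add_one
    (p e d : ℕ) (hp : p.Prime) (he : 0 < e) (hd : 0 < d) :
    Nat.gcd (p ^ e - 1) (p ^ d + 1) * (p ^ Nat.gcd d e - 1) =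
      ((p ^ Nat.gcd d e) ^ (if padicValNat 2 d < padicValNat 2 e then 2 else 1) - 1) *
        2 ^ (if padicValNat 2 (p ^ e - 1) < padicValNat 2 ((p ^ d) ^ 2 - 1) then 1 else 0) ∧
    Nat.gcd (p ^ e - 1) (p ^ d + 1) =
      if padicValNat 2 d < padicValNat 2 e then
        (if padicValNat 2 (p ^ e - 1) < padicValNat 2 ((p ^ d) ^ 2 - 1)
          then 2 * (p ^ Nat.gcd d e + 1) else p ^ Nat.gcd d e + 1)
      else
        (if padicValNat 2 (p ^ e - 1) < padicValNat 2 ((p ^ d) ^ 2 - 1) then 2 else 1) := by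
  obtain ⟨d', e', hcop, hd', he'⟩ := Nat.exists_coprime d e
  set c := Nat.gcd d e
  set z := p ^ c
  have hc : c ≠ 0 := (Nat.gcd_pos_of_pos_left e hd).ne'
  have hz : z ≠ 0 := pow_ne_zero c hp.ne_zero
  have hgcd : Nat.gcd (p ^ e - 1) (p ^ d + 1) = Nat.gcd (z ^ e' - 1) (z ^ d' + 1) := by
    rw [← pow_mul, ← pow_mul, mul_comm c, mul_comm c, ← hd', ← he']
  have hval : padicValNat 2 d < padicValNat 2 e ↔ Even e' := by
    rw [hd', he', even_iff_two_dvd]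
    exact padicValNat_mul_lt_mul_iff_dvd hc (by rintro rfl; omega) (by rintro rfl; omega) hcop
  have hcond := padicValNat.pow_two_sub_one_lt_sq_iff hp.two_le he.ne' hd.ne'
  rw [hgcd]
  by_cases hde : padicValNat 2 d < padicValNat 2 e
  · rw [Nat.gcd_pow_sub_one_pow_add_one_of_even hz hcop (hval.mp hde)]
    simp only [hcond, hde, if_true, not_le.mpr hde, and_false, if_false, pow_zero, mul_one,
      and_true]
    rw [← Nat.sq_sub_sq, one_pow]
  · have he'_odd : Odd e' := Nat.not_even_iff_odd.mp (hval.not.mp hde)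
    rw [Nat.gcd_pow_sub_one_pow_add_one_of_odd hz hcop he'_odd]
    simp only [hcond, hde, if_false, not_lt.mp hde, and_true, pow_one]
    rcases Nat.even_or_odd p with hp2 | hp2
    · have hz2 : Odd (z - 1) := Nat.Even.sub_odd (Nat.one_le_iff_ne_zero.mpr hz)
        (hp2.pow_of_ne_zero hc) odd_one
      simp [hz2.coprime_two_right.gcd_eq_one, Nat.not_odd_iff_even.mpr hp2]
    · have hz2 : Even (z - 1) := Nat.Odd.sub_odd hp2.pow odd_one
      simp [Nat.gcd_eq_right (even_iff_two_dvd.mp hz2), hp2, mul_comm]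
end

section
/- Let F be a perfect field of characteristic p > 0, let l and m be positive coprime integers, write m = l·s + k with 1 ≤ k < l (division with remainder) and s = t·p + r with 0 ≤ r < p, and let w ∈ F[x] be monic of degree s. Then: (p does not divide l and k·w + l·x·w' = 0) if and only if (p divides m and there exists a monic u ∈ F[x] with w = x^r · u^p). Moreover such u, when it exists, is unique. -/
/-!
Since `s ≡ r (mod p)`, in `F[X]` we have `k w + l X w' = m w + l (X w' - r w)`, and the coefficient
of `X ^ s` on the left is `k + l s = m`. So when `p ∤ l` the equation says exactly `p ∣ m` and
`X w' = r w`. The latter forces every exponent occurring in `w` to be `≡ r (mod p)`; as `r < p`,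
`w = X ^ r v` with `v' = 0`, and over a perfect field such `v` are the `p`-th powers.
Uniqueness of `u` is injectivity of Frobenius on the reduced ring `F[X]`.
-/

open Polynomial

theorem ExpChar.charP_of_prime {R : Type*} [AddMonoidWithOne R] {p : ℕ} [h : ExpChar R p]
    (hp : p.Prime) : CharP R p := by
  cases h with
  | zero => exact absurd hp Nat.not_prime_one
  | prime => assumption

namespace Polynomial

section CommSemiring

variable {R : Type*} [CommSemiring R]

theorem coeff_X_mul_derivative (f : R[X]) (n : ℕ) :
    (X * derivative f).coeff n = n * f.coeff n := by
  cases n with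
  | zero => simp
  | succ n => rw [coeff_X_mul, coeff_derivative, mul_comm]; push_cast; ring

theorem X_mul_derivative_X_pow_mul (r : ℕ) (v : R[X]) :
    X * derivative (X ^ r * v) = (r : R[X]) * (X ^ r * v) + X ^ (r + 1) * derivative v := by
  rw [derivative_mul, derivative_X_pow, C_eq_natCast]
  cases r with
  | zero => simp
  | succ r => push_cast; ring

theorem derivative_pow_char (p : ℕ) [CharP R p] (u : R[X]) : derivative (u ^ p) = 0 := by
  simp [derivative_pow, CharP.cast_eq_zero]

end CommSemiring

section CharP

variable {R : Type*} [CommRing R] [IsDomain R] {p : ℕ} [CharP R p]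

theorem X_pow_dvd_of_X_mul_derivative_eq {r : ℕ} (hr : r < p) {w : R[X]}
    (h : X * derivative w = (r : R[X]) * w) : X ^ r ∣ w := by
  refine X_pow_dvd_iff.mpr fun d hd => by_contra fun hwd => hd.ne ?_
  have hcoeff : (d : R) * w.coeff d = r * w.coeff d := by
    rw [← coeff_X_mul_derivative, h, coeff_natCast_mul]
  exact ((CharP.natCast_eq_natCast R p).mp (mul_right_cancel₀ hwd hcoeff)).eq_of_lt_of_lt
    (hd.trans hr) hr

theorem X_mul_derivative_eq_natCast_mul_iff [Fact p.Prime] [PerfectRing R p] {r : ℕ} (hr : r < p)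
    (w : R[X]) : X * derivative w = (r : R[X]) * w ↔ ∃ u : R[X], w = X ^ r * u ^ p := by
  constructor
  · intro h
    obtain ⟨v, rfl⟩ := X_pow_dvd_of_X_mul_derivative_eq hr h
    have hv : derivative v = 0 := by
      rw [X_mul_derivative_X_pow_mul, add_eq_left] at h
      exact (mul_eq_zero.mp h).resolve_left (pow_ne_zero _ X_ne_zero)
    refine ⟨(contract p v).map (frobeniusEquiv R p).symm, ?_⟩
    rw [← polynomial_expand_eq, expand_contract' p hv]
  · rintro ⟨u, rfl⟩
    rw [X_mul_derivative_X_pow_mul, derivative_pow_char, mul_zero, add_zero]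

theorem Monic.of_X_pow_mul_pow [Fact p.Prime] [PerfectRing R p] {r : ℕ} {u : R[X]}
    (h : (X ^ r * u ^ p).Monic) : u.Monic :=
  injective_pow_p R p (by rw [one_pow, ← leadingCoeff_pow, (monic_X_pow r).of_mul_monic_left h])

end CharP

end Polynomial

theorem kw_plus_lxw_deriv_eq_zero_iff_general
    {F : Type*} [Field F] (p : ℕ) (hp : p.Prime) [ExpChar F p] [PerfectRing F p]
    (l m k s t r : ℕ) (hco : Nat.Coprime l m)
    (hdiv : m = l * s + k)
    (hdiv2 : s = t * p + r) (hr : r < p)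
    (w : F[X]) (hw : w.Monic) (hwd : w.natDegree = s) :
    (((¬ p ∣ l) ∧ (k : F[X]) * w + (l : F[X]) * (X * derivative w) = 0) ↔
      (p ∣ m ∧ ∃ u : F[X], u.Monic ∧ w = X ^ r * u ^ p)) ∧
    (∀ u₁ u₂ : F[X], u₁.Monic → u₂.Monic →
      w = X ^ r * u₁ ^ p → w = X ^ r * u₂ ^ p → u₁ = u₂) := by
  have := Fact.mk hp
  have : CharP F p := ExpChar.charP_of_prime hp
  have hm : (m : F[X]) = (l : F[X]) * r + k := by
    rw [hdiv, hdiv2]; push_cast; rw [CharP.cast_eq_zero F[X] p]; ring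
  have hsplit : (k : F[X]) * w + (l : F[X]) * (X * derivative w) =
      (m : F[X]) * w + (l : F[X]) * (X * derivative w - (r : F[X]) * w) := by
    rw [hm]; ring
  have hm_zero : p ∣ m → (m : F[X]) = 0 := (CharP.cast_eq_zero_iff F[X] p m).mpr
  refine ⟨⟨?_, ?_⟩, ?_⟩
  · rintro ⟨hpl, hE⟩
    have hpm : p ∣ m := by
      have hs := congrArg (coeff · s) hE
      simp only [coeff_add, coeff_natCast_mul, coeff_X_mul_derivative, ← hwd,
        hw.coeff_natDegree, coeff_zero] at hs
      exact (CharP.cast_eq_zero_iff F p m).mp (by rw [hdiv, ← hwd]; push_cast; linear_combination hs)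
    have hl : (l : F[X]) ≠ 0 := by rwa [Ne, CharP.cast_eq_zero_iff F[X] p]
    rw [hsplit, hm_zero hpm, zero_mul, zero_add, mul_eq_zero, sub_eq_zero] at hE
    obtain ⟨u, hwu⟩ := (X_mul_derivative_eq_natCast_mul_iff hr w).mp (hE.resolve_left hl)
    exact ⟨hpm, u, (hwu ▸ hw).of_X_pow_mul_pow, hwu⟩
  · rintro ⟨hpm, u, -, hwu⟩
    refine ⟨fun hpl => hp.ne_one (Nat.eq_one_of_dvd_coprimes hco hpl hpm), ?_⟩
    rw [hsplit, hm_zero hpm, (X_mul_derivative_eq_natCast_mul_iff hr w).mpr ⟨u, hwu⟩]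
    ring
  · rintro u₁ u₂ - - rfl h
    exact frobenius_inj F[X] p (mul_left_cancel₀ (pow_ne_zero r X_ne_zero) h)

theorem kw_plus_lxw_deriv_eq_zero_iff
    {F : Type*} [Field F] (p : ℕ) (hp : p.Prime) [ExpChar F p] [PerfectRing F p]
    (l m k s t r : ℕ) (hl : 0 < l) (hm : 0 < m) (hco : Nat.Coprime l m)
    (hdiv : m = l * s + k) (hk1 : 1 ≤ k) (hkl : k < l)
    (hdiv2 : s = t * p + r) (hr : r < p)
    (w : F[X]) (hw : w.Monic) (hwd : w.natDegree = s) :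
    (((¬ p ∣ l) ∧ (k : F[X]) * w + (l : F[X]) * (X * derivative w) = 0) ↔
      (p ∣ m ∧ ∃ u : F[X], u.Monic ∧ w = X ^ r * u ^ p)) ∧
    (∀ u₁ u₂ : F[X], u₁.Monic → u₂.Monic →
      w = X ^ r * u₁ ^ p → w = X ^ r * u₂ ^ p → u₁ = u₂) :=
  kw_plus_lxw_deriv_eq_zero_iff_general p hp l m k s t r hco hdiv hdiv2 hr w hw hwd
end

section
/- Over a finite field F_q of characteristic p with p dividing the composite degree n = l·m (l, m ≥ 2), the set D_n^φ of Frobenius compositions of degree n (polynomials of degree n lying in F_q[x^p] that are decomposable compositions) satisfies #D_n^φ = q^{n/p + 1}(1 − q^{-1}). -/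
/-! Every Frobenius composition is `g ∘ xᵖ` with `deg g = lm/p`, and conversely each such `g ∘ xᵖ`
is decomposable, since `p ≥ 2` and `lm/p ≥ 2` (`lm` is not prime). As `g ↦ g ∘ xᵖ` is injective,
the count is the number of polynomials of degree exactly `lm/p`. -/

open Polynomial

namespace Polynomial

variable {R : Type*}

section Semiring

variable [Semiring R]

theorem ncard_degreeLT [Fintype R] (n : ℕ) :
    (degreeLT R n : Set R[X]).ncard = Fintype.card R ^ n := by
  rw [← Nat.card_coe_set_eq, SetLike.coe_sort_coe, Nat.card_congr (degreeLTEquiv R n).toEquiv,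
    Nat.card_fun]
  simp

theorem setOf_natDegree_eq_degreeLT_sdiff {n : ℕ} (hn : n ≠ 0) :
    {f : R[X] | f.natDegree = n} = (degreeLT R (n + 1) : Set R[X]) \ degreeLT R n := by
  ext f
  rw [degreeLT_succ_eq_degreeLE, Set.mem_ofPred_eq,
    ← degree_eq_iff_natDegree_eq_of_pos (Nat.pos_of_ne_zero hn), Set.mem_sdiff, SetLike.mem_coe,
    SetLike.mem_coe, mem_degreeLE, mem_degreeLT, not_lt, le_antisymm_iff]

theorem ncard_setOf_natDegree_eq [Fintype R] {n : ℕ} (hn : n ≠ 0) :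
    {f : R[X] | f.natDegree = n}.ncard = Fintype.card R ^ (n + 1) - Fintype.card R ^ n := by
  have hfin : (degreeLT R n : Set R[X]).Finite :=
    Set.finite_of_ncard_pos (by rw [ncard_degreeLT]; exact pow_pos Fintype.card_pos n)
  rw [setOf_natDegree_eq_degreeLT_sdiff hn, Set.ncard_sdiff (degreeLT_mono n.le_succ) hfin,
    ncard_degreeLT, ncard_degreeLT]

end Semiring

theorem setOf_frobeniusComposition_eq_image [CommSemiring R] [Nontrivial R] {p n : ℕ}
    (hp : 2 ≤ p) (hpn : p ∣ n) (hn : 2 ≤ n / p) :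
    {f : R[X] | f.natDegree = n ∧
      (∃ g h : R[X], 2 ≤ g.natDegree ∧ 2 ≤ h.natDegree ∧ f = g.comp h) ∧
      ∃ g' : R[X], f = g'.comp (X ^ p)} = expand R p '' {g | g.natDegree = n / p} := by
  ext f
  constructor
  · rintro ⟨hf, -, g, rfl⟩
    rw [← expand_eq_comp_X_pow, natDegree_expand] at hf
    exact ⟨g, (Nat.div_eq_of_eq_mul_left (by omega) hf.symm).symm, rfl⟩
  · rintro ⟨g, hg, rfl⟩
    refine ⟨?_, ⟨g, X ^ p, hg ▸ hn, by rwa [natDegree_X_pow], rfl⟩, g, rfl⟩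
    rw [natDegree_expand, Set.mem_ofPred.mp hg, Nat.div_mul_cancel hpn]

end Polynomial

theorem Nat.two_le_div_of_not_prime {n p : ℕ} (hn : ¬ n.Prime) (hn0 : n ≠ 0) (hp : p.Prime)
    (hpn : p ∣ n) : 2 ≤ n / p := by
  obtain ⟨k, rfl⟩ := hpn
  rw [Nat.mul_div_cancel_left _ hp.pos]
  have hk0 : k ≠ 0 := by rintro rfl; simp at hn0
  have hk1 : k ≠ 1 := by rintro rfl; simp [hp] at hn
  omega

theorem count_frobenius_compositions_general
    {F : Type*} [Field F] [Fintype F] (p l m : ℕ) (hp : p.Prime)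
    (hl : 2 ≤ l) (hm : 2 ≤ m) (hdvd : p ∣ l * m) :
    Set.ncard {f : F[X] | f.natDegree = l * m ∧
      (∃ g h : F[X], 2 ≤ g.natDegree ∧ 2 ≤ h.natDegree ∧ f = g.comp h) ∧
      ∃ g' : F[X], f = g'.comp (X ^ p)} =
    Fintype.card F ^ (l * m / p + 1) - Fintype.card F ^ (l * m / p) := by
  have hdeg : 2 ≤ l * m / p :=
    Nat.two_le_div_of_not_prime (Nat.not_prime_mul (by omega) (by omega))
      (by positivity) hp hdvd
  rw [setOf_frobeniusComposition_eq_image hp.two_le hdvd hdeg,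
    Set.ncard_image_of_injective _ (expand_injective hp.pos), ncard_setOf_natDegree_eq (by omega)]

theorem count_frobenius_compositions
    {F : Type*} [Field F] [Fintype F] (p l m : ℕ) [CharP F p] (hp : p.Prime)
    (hl : 2 ≤ l) (hm : 2 ≤ m) (hdvd : p ∣ l * m) :
    Set.ncard {f : F[X] | f.natDegree = l * m ∧
      (∃ g h : F[X], 2 ≤ g.natDegree ∧ 2 ≤ h.natDegree ∧ f = g.comp h) ∧
      ∃ g' : F[X], f = g'.comp (X ^ p)} =
    Fintype.card F ^ (l * m / p + 1) - Fintype.card F ^ (l * m / p) :=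
  count_frobenius_compositions_general p l m hp hl hm hdvd
end

section
/- Let F be a field of characteristic p ≥ 2, let l, m, n ≥ 2 be integers with p | n = l·m and p ∤ l, and suppose f = g ∘ h = g* ∘ h* with all of g, h, g*, h* monic original, deg g = deg h* = m, deg h = deg g* = l, and f' ≠ 0. Then g' ≠ 0, (h*)' ≠ 0, and deg (h*)' < m − l. -/
/-!
Differentiate `g ∘ h = g* ∘ h*` by the chain rule. Since `p ∣ m = deg g` the coefficient of
`X ^ (m - 1)` in `g'` vanishes, so `deg g' ≤ m - 2`, while `p ∤ l` gives `deg (g*)' = l - 1`.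
Comparing degrees of `f'` in the two decompositions,
`deg (h*)' + (l - 1) m = deg h' + l · deg g' ≤ (l - 1) + l (m - 2)`, i.e. `deg (h*)' < m - l`.
-/

open Polynomial

namespace Polynomial

section Semiring

variable {R : Type*} [Semiring R] {p : R[X]}

theorem coeff_derivative_natDegree_sub_one (hp : p.natDegree ≠ 0) :
    (derivative p).coeff (p.natDegree - 1) = p.leadingCoeff * p.natDegree := by
  rw [coeff_derivative, ← Nat.cast_add_one, Nat.sub_add_cancel (Nat.one_le_iff_ne_zero.mpr hp),
    leadingCoeff]

theorem natDegree_derivative_add_two_le_of_cast_eq_zero (hp : (p.natDegree : R) = 0)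
    (hd : derivative p ≠ 0) : (derivative p).natDegree + 2 ≤ p.natDegree := by
  have hp0 : p.natDegree ≠ 0 := fun h0 => hd (derivative_of_natDegree_zero h0)
  have hcoeff : (derivative p).coeff (p.natDegree - 1) = 0 := by
    rw [coeff_derivative_natDegree_sub_one hp0, hp, mul_zero]
  have hne : (derivative p).natDegree ≠ p.natDegree - 1 := fun h =>
    leadingCoeff_ne_zero.mpr hd (by rwa [leadingCoeff, h])
  have := natDegree_derivative_le p
  omega

theorem natDegree_derivative_of_cast_ne_zero [NoZeroDivisors R] (hp : (p.natDegree : R) ≠ 0) :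
    (derivative p).natDegree = p.natDegree - 1 := by
  have hp0 : p.natDegree ≠ 0 := fun h => hp (by rw [h, Nat.cast_zero])
  have hp_ne : p ≠ 0 := by rintro rfl; simp at hp0
  refine le_antisymm (natDegree_derivative_le p) (le_natDegree_of_ne_zero ?_)
  rw [coeff_derivative_natDegree_sub_one hp0]
  exact mul_ne_zero (leadingCoeff_ne_zero.mpr hp_ne) hp

end Semiring

section CommSemiring

variable {R : Type*} [CommSemiring R] {p q : R[X]}

theorem derivative_ne_zero_of_derivative_comp_ne_zero (h : derivative (p.comp q) ≠ 0) :
    derivative p ≠ 0 ∧ derivative q ≠ 0 := by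
  rw [derivative_comp] at h
  exact ⟨fun hp => h (by rw [hp, zero_comp, mul_zero]), fun hq => h (by rw [hq, zero_mul])⟩

theorem natDegree_derivative_comp [NoZeroDivisors R] (h : derivative (p.comp q) ≠ 0) :
    (derivative (p.comp q)).natDegree =
      (derivative q).natDegree + (derivative p).natDegree * q.natDegree := by
  rw [derivative_comp] at h ⊢
  rw [natDegree_mul (left_ne_zero_of_mul h) (right_ne_zero_of_mul h), natDegree_comp]

end CommSemiring

end Polynomial

theorem wild_collision_derivative_degree_bound_general
    {F : Type*} [Field F] (p l m : ℕ) [CharP F p] (hp : p.Prime)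
    (hdvd : p ∣ l * m) (hpl : ¬ p ∣ l)
    (g h g' h' : F[X])
    (hgd : g.natDegree = m)
    (hhd : h.natDegree = l)
    (hg'd : g'.natDegree = l)
    (hh'd : h'.natDegree = m)
    (heq : g.comp h = g'.comp h')
    (hf : derivative (g.comp h) ≠ 0) :
    derivative g ≠ 0 ∧ derivative h' ≠ 0 ∧
      ((derivative h').natDegree : ℤ) < (m : ℤ) - (l : ℤ) := by
  have hpm : p ∣ m := (hp.dvd_mul.mp hdvd).resolve_left hpl
  have hl : 1 ≤ l := Nat.one_le_iff_ne_zero.mpr fun hl0 => hpl (hl0 ▸ dvd_zero p)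
  have hf' : derivative (g'.comp h') ≠ 0 := heq ▸ hf
  obtain ⟨hDg, -⟩ := derivative_ne_zero_of_derivative_comp_ne_zero hf
  obtain ⟨-, hDh'⟩ := derivative_ne_zero_of_derivative_comp_ne_zero hf'
  refine ⟨hDg, hDh', ?_⟩
  have hdg : (derivative g).natDegree + 2 ≤ m := hgd ▸
    natDegree_derivative_add_two_le_of_cast_eq_zero (by rwa [hgd, CharP.cast_eq_zero_iff F p]) hDg
  have hdh : (derivative h).natDegree ≤ l - 1 := hhd ▸ natDegree_derivative_le h
  have hdg' : (derivative g').natDegree = l - 1 := hg'd ▸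
    natDegree_derivative_of_cast_ne_zero (by rwa [hg'd, Ne, CharP.cast_eq_zero_iff F p])
  have hdeg := natDegree_derivative_comp hf
  rw [heq, natDegree_derivative_comp hf', hdg', hh'd, hhd] at hdeg
  have hmul := Nat.mul_le_mul_right l hdg
  zify [hl] at hdeg hdh hmul ⊢
  nlinarith

theorem wild_collision_derivative_degree_bound
    {F : Type*} [Field F] (p l m : ℕ) [CharP F p] (hp : p.Prime)
    (hl : 2 ≤ l) (hm : 2 ≤ m) (hdvd : p ∣ l * m) (hpl : ¬ p ∣ l)
    (g h g' h' : F[X])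
    (hg : g.Monic) (hgd : g.natDegree = m) (hg0 : g.coeff 0 = 0)
    (hh : h.Monic) (hhd : h.natDegree = l) (hh0 : h.coeff 0 = 0)
    (hg' : g'.Monic) (hg'd : g'.natDegree = l) (hg'0 : g'.coeff 0 = 0)
    (hh' : h'.Monic) (hh'd : h'.natDegree = m) (hh'0 : h'.coeff 0 = 0)
    (heq : g.comp h = g'.comp h')
    (hf : derivative (g.comp h) ≠ 0) :
    derivative g ≠ 0 ∧ derivative h' ≠ 0 ∧
      ((derivative h').natDegree : ℤ) < (m : ℤ) - (l : ℤ) :=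
  wild_collision_derivative_degree_bound_general p l m hp hdvd hpl g h g' h' hgd hhd hg'd hh'd heq
    hf
end
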